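/- For functions f, g, h on Ω = M × (−1,1), the anisotropic tri-linear estimate holds in its second form: ∫_M (∫_{−1}^1 |f| dz)(∫_{−1}^1 |g h| dz) dxdy ≤ C ‖f‖_{L²} ‖g‖_{L²}^{1/2}(‖g‖_{L²}^{1/2} + ‖∇_H g‖_{L²}^{1/2}) ‖h‖_{L²}^{1/2}(‖h‖_{L²}^{1/2} + ‖∇_H h‖_{L²}^{1/2}), whenever the right-hand side is finite. -/

import Mathlib

open MeasureTheory Set

/-- squared L² norm over Ω = (0,L₁)×(0,L₂)×(−1,1) -/
noncomputable def l2sq (L₁ L₂ : ℝ) (f : ℝ → ℝ → ℝ → ℝ) : ℝ :=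
  ∫ x in Ioo (0:ℝ) L₁, ∫ y in Ioo (0:ℝ) L₂, ∫ z in Ioo (-1:ℝ) 1, (f x y z)^2

noncomputable def l2norm (L₁ L₂ : ℝ) (f : ℝ → ℝ → ℝ → ℝ) : ℝ :=
  Real.sqrt (l2sq L₁ L₂ f)

/-- L² norm of the horizontal gradient, given the partial derivatives fx, fy -/
noncomputable def gradHnorm (L₁ L₂ : ℝ) (fx fy : ℝ → ℝ → ℝ → ℝ) : ℝ :=
  Real.sqrt (∫ x in Ioo (0:ℝ) L₁, ∫ y in Ioo (0:ℝ) L₂, ∫ z in Ioo (-1:ℝ) 1,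
    ((fx x y z)^2 + (fy x y z)^2))

def Cont3 (f : ℝ → ℝ → ℝ → ℝ) : Prop :=
  Continuous fun q : ℝ × ℝ × ℝ => f q.1 q.2.1 q.2.2

open Metric


lemma intOnIoo {a b : ℝ} {u : ℝ → ℝ} (hu : Continuous u) : IntegrableOn u (Ioo a b) :=
  (hu.integrableOn_Icc).mono_set Ioo_subset_Icc_self

lemma finRestrict (a b : ℝ) : IsFiniteMeasure (volume.restrict (Ioo a b)) :=
  ⟨by rw [Measure.restrict_apply_univ]; exact measure_Ioo_lt_top⟩

lemma sqrtAdd {a b : ℝ} (ha : 0 ≤ a) (hb : 0 ≤ b) :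
    Real.sqrt (a + b) ≤ Real.sqrt a + Real.sqrt b := by
  have h : a + b ≤ (Real.sqrt a + Real.sqrt b)^2 := by
    nlinarith [Real.sq_sqrt ha, Real.sq_sqrt hb, Real.sqrt_nonneg a, Real.sqrt_nonneg b]
  calc Real.sqrt (a+b) ≤ Real.sqrt ((Real.sqrt a + Real.sqrt b)^2) := Real.sqrt_le_sqrt h
    _ = _ := Real.sqrt_sq (by positivity)

/-- continuity of a parametric integral over `Ioo a b` -/
lemma contParam {X : Type*} [MetricSpace X] [ProperSpace X] (a b : ℝ)
    {F : X → ℝ → ℝ} (hF : Continuous fun p : X × ℝ => F p.1 p.2) :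
    Continuous fun x => ∫ t in Ioo a b, F x t := by
  rw [continuous_iff_continuousAt]
  intro x₀
  have hK : IsCompact (closedBall x₀ 1 ×ˢ Icc a b) :=
    (isCompact_closedBall x₀ 1).prod isCompact_Icc
  obtain ⟨M, hM⟩ := hK.exists_bound_of_continuousOn hF.continuousOn
  apply continuousAt_of_dominated (bound := fun _ => M)
  · exact Filter.Eventually.of_forall fun x =>
      (hF.comp (continuous_const.prodMk continuous_id)).aestronglyMeasurable
  · filter_upwards [closedBall_mem_nhds x₀ one_pos] with x hx
    refine ae_restrict_of_forall_mem measurableSet_Ioo fun t ht => ?_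
    exact hM (x, t) ⟨hx, Ioo_subset_Icc_self ht⟩
  · exact integrableOn_const measure_Ioo_lt_top.ne
  · exact Filter.Eventually.of_forall fun t =>
      (hF.comp (continuous_id.prodMk continuous_const)).continuousAt


/-- differentiation under the integral over `Ioo a b` -/
lemma derivParam (a b : ℝ) {F F' : ℝ → ℝ → ℝ}
    (hF : Continuous fun p : ℝ × ℝ => F p.1 p.2)
    (hF' : Continuous fun p : ℝ × ℝ => F' p.1 p.2)
    (hd : ∀ x t, HasDerivAt (fun s => F s t) (F' x t) x) (x₀ : ℝ) :
    HasDerivAt (fun x => ∫ t in Ioo a b, F x t) (∫ t in Ioo a b, F' x₀ t) x₀ := by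
  have hK : IsCompact (closedBall x₀ 1 ×ˢ Icc a b) :=
    (isCompact_closedBall x₀ 1).prod isCompact_Icc
  obtain ⟨M, hM⟩ := hK.exists_bound_of_continuousOn hF'.continuousOn
  have H := hasDerivAt_integral_of_dominated_loc_of_deriv_le
    (μ := volume.restrict (Ioo a b)) (F := F) (F' := F') (x₀ := x₀)
    (bound := fun _ => M) (s := ball x₀ 1) (ball_mem_nhds x₀ one_pos)
    (Filter.Eventually.of_forall fun x =>
      (hF.comp (continuous_const.prodMk continuous_id)).aestronglyMeasurable)
    (intOnIoo (hF.comp (continuous_const.prodMk continuous_id)))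
    (hF'.comp (continuous_const.prodMk continuous_id)).aestronglyMeasurable
    ?_ (integrableOn_const measure_Ioo_lt_top.ne) ?_
  · exact H.2
  · refine ae_restrict_of_forall_mem measurableSet_Ioo fun t ht x hx => ?_
    exact hM (x, t) ⟨ball_subset_closedBall hx, Ioo_subset_Icc_self ht⟩
  · exact ae_restrict_of_forall_mem measurableSet_Ioo fun t _ x _ => hd x t

/-- Cauchy–Schwarz for set integrals over `Ioo` of continuous functions. -/
lemma csIoo (a b : ℝ) {u v : ℝ → ℝ} (hu : Continuous u) (hv : Continuous v) :
    ∫ t in Ioo a b, |u t * v t| ≤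
      Real.sqrt (∫ t in Ioo a b, (u t)^2) * Real.sqrt (∫ t in Ioo a b, (v t)^2) := by
  haveI : IsFiniteMeasure (volume.restrict (Ioo a b)) :=
    ⟨by rw [Measure.restrict_apply_univ]; exact measure_Ioo_lt_top⟩
  obtain ⟨Mu, hMu⟩ := (isCompact_Icc (a := a) (b := b)).exists_bound_of_continuousOn
    hu.continuousOn
  obtain ⟨Mv, hMv⟩ := (isCompact_Icc (a := a) (b := b)).exists_bound_of_continuousOn
    hv.continuousOn
  have hpq : Real.HolderConjugate 2 2 := ⟨by norm_num, by norm_num, by norm_num⟩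
  have humem : MemLp u (ENNReal.ofReal 2) (volume.restrict (Ioo a b)) :=
    MemLp.of_bound hu.aestronglyMeasurable Mu
      (ae_restrict_of_forall_mem measurableSet_Ioo fun t ht => hMu t (Ioo_subset_Icc_self ht))
  have hvmem : MemLp v (ENNReal.ofReal 2) (volume.restrict (Ioo a b)) :=
    MemLp.of_bound hv.aestronglyMeasurable Mv
      (ae_restrict_of_forall_mem measurableSet_Ioo fun t ht => hMv t (Ioo_subset_Icc_self ht))
  have key := integral_mul_norm_le_Lp_mul_Lq hpq humem hvmem
  have e1 : ∀ w : ℝ → ℝ, (∫ t in Ioo a b, ‖w t‖ ^ (2:ℝ)) = ∫ t in Ioo a b, (w t)^2 := by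
    intro w
    refine integral_congr_ae (Filter.Eventually.of_forall fun t => ?_)
    show ‖w t‖ ^ (2:ℝ) = (w t)^2
    rw [show (2:ℝ) = ((2:ℕ):ℝ) by norm_num, Real.rpow_natCast, Real.norm_eq_abs, sq_abs]
  calc ∫ t in Ioo a b, |u t * v t| = ∫ t in Ioo a b, ‖u t‖ * ‖v t‖ := by
        refine integral_congr_ae (Filter.Eventually.of_forall fun t => ?_)
        show |u t * v t| = ‖u t‖ * ‖v t‖
        simp [abs_mul]
    _ ≤ (∫ t in Ioo a b, ‖u t‖ ^ (2:ℝ)) ^ (1/(2:ℝ)) *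
        (∫ t in Ioo a b, ‖v t‖ ^ (2:ℝ)) ^ (1/(2:ℝ)) := key
    _ = _ := by rw [e1, e1, ← Real.sqrt_eq_rpow, ← Real.sqrt_eq_rpow]


/-- 1D "Agmon"-type bound on a bounded interval. -/
lemma agmon1d {L : ℝ} (hL : 0 < L) {Ψ D : ℝ → ℝ} (hΨD : ∀ x, HasDerivAt Ψ (D x) x)
    (hD : Continuous D) {x : ℝ} (hx : x ∈ Ioo 0 L) :
    Ψ x ≤ (1/L) * (∫ t in Ioo 0 L, Ψ t) + ∫ t in Ioo 0 L, |D t| := by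
  have hdiff : Differentiable ℝ Ψ := fun t => (hΨD t).differentiableAt
  have hΨc : Continuous Ψ := hdiff.continuous
  have habs : IntegrableOn (fun t => |D t|) (Ioo 0 L) := intOnIoo hD.abs
  have key : ∀ x' ∈ Ioo 0 L, Ψ x ≤ Ψ x' + ∫ t in Ioo 0 L, |D t| := by
    intro x' hx'
    have ftc : ∫ t in x'..x, D t = Ψ x - Ψ x' :=
      intervalIntegral.integral_eq_sub_of_hasDerivAt (fun t _ => hΨD t)
        (hD.intervalIntegrable _ _)
    have h1 : Ψ x - Ψ x' ≤ |∫ t in x'..x, D t| := by rw [ftc]; exact le_abs_self _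
    have step : ∀ c d : ℝ, c ∈ Ioo 0 L → d ∈ Ioo 0 L → c ≤ d →
        |∫ t in c..d, D t| ≤ ∫ t in Ioo 0 L, |D t| := by
      intro c d hc hd hcd
      rw [intervalIntegral.integral_of_le hcd]
      calc |∫ t in Ioc c d, D t| ≤ ∫ t in Ioc c d, |D t| := by
            simpa using norm_integral_le_integral_norm (μ := volume.restrict (Ioc c d)) D
        _ ≤ ∫ t in Ioo 0 L, |D t| := by
            refine setIntegral_mono_set habs (Filter.Eventually.of_forall fun t => abs_nonneg _)
              (HasSubset.Subset.eventuallyLE fun t ht => ?_)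
            exact ⟨lt_trans hc.1 ht.1, lt_of_le_of_lt ht.2 hd.2⟩
    have h2 : |∫ t in x'..x, D t| ≤ ∫ t in Ioo 0 L, |D t| := by
      rcases le_total x' x with hle | hle
      · exact step x' x hx' hx hle
      · rw [intervalIntegral.integral_symm, abs_neg]
        exact step x x' hx hx' hle
    linarith
  have hvol : (volume (Ioo (0:ℝ) L)).toReal = L := by
    rw [Real.volume_Ioo]; simpa using ENNReal.toReal_ofReal hL.le
  have h3 := setIntegral_mono_on (μ := volume) (s := Ioo 0 L)
    (f := fun _ => Ψ x) (g := fun x' => Ψ x' + ∫ t in Ioo 0 L, |D t|)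
    (integrableOn_const measure_Ioo_lt_top.ne)
    ((intOnIoo hΨc).add (integrableOn_const measure_Ioo_lt_top.ne))
    measurableSet_Ioo key
  rw [setIntegral_const, integral_add (intOnIoo hΨc)
    (integrableOn_const measure_Ioo_lt_top.ne), setIntegral_const, measureReal_def, hvol] at h3
  simp only [smul_eq_mul] at h3
  have h4 : Ψ x = (L * Ψ x) / L := by field_simp
  rw [h4, div_le_iff₀ hL]
  have h5 : ((1/L) * (∫ t in Ioo 0 L, Ψ t) + ∫ t in Ioo 0 L, |D t|) * L
      = (∫ t in Ioo 0 L, Ψ t) + L * ∫ t in Ioo 0 L, |D t| := by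
    field_simp
  rw [h5]; linarith [h3]

noncomputable def psiZ (g : ℝ→ℝ→ℝ→ℝ) (x y : ℝ) : ℝ := ∫ z in Ioo (-1:ℝ) 1, (g x y z)^2
noncomputable def dZ (g g' : ℝ→ℝ→ℝ→ℝ) (x y : ℝ) : ℝ :=
  ∫ z in Ioo (-1:ℝ) 1, 2 * g x y z * g' x y z
noncomputable def phiZ (f : ℝ→ℝ→ℝ→ℝ) (x y : ℝ) : ℝ := ∫ z in Ioo (-1:ℝ) 1, |f x y z|
noncomputable def ghZ (g h : ℝ→ℝ→ℝ→ℝ) (x y : ℝ) : ℝ :=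
  ∫ z in Ioo (-1:ℝ) 1, |g x y z * h x y z|

lemma cont3_pair {g} (hg : Cont3 g) :
    Continuous fun p : (ℝ×ℝ)×ℝ => g p.1.1 p.1.2 p.2 :=
  hg.comp ((continuous_fst.comp continuous_fst).prodMk
    ((continuous_snd.comp continuous_fst).prodMk continuous_snd))

lemma cont3_fix1 {g} (hg : Cont3 g) (x : ℝ) :
    Continuous fun p : ℝ×ℝ => g x p.1 p.2 :=
  hg.comp (continuous_const.prodMk continuous_id)

lemma cont3_fix12 {g} (hg : Cont3 g) (x y : ℝ) : Continuous fun z => g x y z :=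
  hg.comp (continuous_const.prodMk (continuous_const.prodMk continuous_id))

lemma cont3_fix2 {g} (hg : Cont3 g) (y : ℝ) :
    Continuous fun p : ℝ×ℝ => g p.1 y p.2 :=
  hg.comp (continuous_fst.prodMk (continuous_const.prodMk continuous_snd))

lemma contParamZ {G : ℝ→ℝ→ℝ→ℝ} (hG : Cont3 G) :
    Continuous fun p : ℝ×ℝ => ∫ z in Ioo (-1:ℝ) 1, G p.1 p.2 z :=
  contParam (-1) 1 (F := fun (p : ℝ×ℝ) z => G p.1 p.2 z) (cont3_pair hG)

lemma contPsiZ {g} (hg : Cont3 g) : Continuous fun p : ℝ×ℝ => psiZ g p.1 p.2 :=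
  contParamZ (G := fun x y z => (g x y z)^2) (hg.pow 2)

lemma contDZ {g g'} (hg : Cont3 g) (hg' : Cont3 g') :
    Continuous fun p : ℝ×ℝ => dZ g g' p.1 p.2 :=
  contParamZ (G := fun x y z => 2 * g x y z * g' x y z) ((continuous_const.mul hg).mul hg')

lemma contPhiZ {f} (hf : Cont3 f) : Continuous fun p : ℝ×ℝ => phiZ f p.1 p.2 :=
  contParamZ (G := fun x y z => |f x y z|) hf.abs

lemma contGhZ {g h} (hg : Cont3 g) (hh : Cont3 h) :
    Continuous fun p : ℝ×ℝ => ghZ g h p.1 p.2 :=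
  contParamZ (G := fun x y z => |g x y z * h x y z|) (hg.mul hh).abs

lemma psiZ_nonneg (g) (x y : ℝ) : 0 ≤ psiZ g x y :=
  setIntegral_nonneg measurableSet_Ioo fun z _ => sq_nonneg _

lemma phiZ_nonneg (f) (x y : ℝ) : 0 ≤ phiZ f x y :=
  setIntegral_nonneg measurableSet_Ioo fun z _ => abs_nonneg _

lemma ghZ_nonneg (g h) (x y : ℝ) : 0 ≤ ghZ g h x y :=
  setIntegral_nonneg measurableSet_Ioo fun z _ => abs_nonneg _

lemma csZ {g h} (hg : Cont3 g) (hh : Cont3 h) (x y : ℝ) :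
    ghZ g h x y ≤ Real.sqrt (psiZ g x y) * Real.sqrt (psiZ h x y) :=
  csIoo (-1) 1 (cont3_fix12 hg x y) (cont3_fix12 hh x y)

lemma dZ_abs_le {g g'} (hg : Cont3 g) (hg' : Cont3 g') (x y : ℝ) :
    |dZ g g' x y| ≤ 2 * (Real.sqrt (psiZ g x y) * Real.sqrt (psiZ g' x y)) := by
  have h1 : |dZ g g' x y| ≤ ∫ z in Ioo (-1:ℝ) 1, |2 * g x y z * g' x y z| := by
    unfold dZ
    simpa only [Real.norm_eq_abs] using norm_integral_le_integral_norm
      (μ := volume.restrict (Ioo (-1:ℝ) 1)) (fun z => 2 * g x y z * g' x y z)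
  have h2 : (∫ z in Ioo (-1:ℝ) 1, |2 * g x y z * g' x y z|)
      = 2 * ∫ z in Ioo (-1:ℝ) 1, |g x y z * g' x y z| := by
    rw [← integral_const_mul]
    refine integral_congr_ae (Filter.Eventually.of_forall fun z => ?_)
    show |2 * g x y z * g' x y z| = 2 * |g x y z * g' x y z|
    rw [mul_assoc, abs_mul]
    norm_num
  have h3 := csIoo (-1) 1 (cont3_fix12 hg x y) (cont3_fix12 hg' x y)
  calc |dZ g g' x y| ≤ 2 * ∫ z in Ioo (-1:ℝ) 1, |g x y z * g' x y z| := by rw [← h2]; exact h1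
    _ ≤ 2 * (Real.sqrt (psiZ g x y) * Real.sqrt (psiZ g' x y)) := by
        have := h3; unfold psiZ; linarith

lemma csMixed (a b : ℝ) {u Q : ℝ→ℝ} (hu : Continuous u) (hQ : Continuous Q)
    (hu0 : ∀ t, 0 ≤ u t) (hQ0 : ∀ t, 0 ≤ Q t) :
    ∫ t in Ioo a b, u t * Real.sqrt (Q t) ≤
      Real.sqrt (∫ t in Ioo a b, (u t)^2) * Real.sqrt (∫ t in Ioo a b, Q t) := by
  have hv : Continuous fun t => Real.sqrt (Q t) := hQ.sqrt
  have h := csIoo a b hu hv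
  have e1 : (∫ t in Ioo a b, |u t * Real.sqrt (Q t)|)
      = ∫ t in Ioo a b, u t * Real.sqrt (Q t) :=
    integral_congr_ae (Filter.Eventually.of_forall fun t =>
      abs_of_nonneg (mul_nonneg (hu0 t) (Real.sqrt_nonneg _)))
  have e2 : (∫ t in Ioo a b, (Real.sqrt (Q t))^2) = ∫ t in Ioo a b, Q t :=
    integral_congr_ae (Filter.Eventually.of_forall fun t => Real.sq_sqrt (hQ0 t))
  rw [e1, e2] at h
  exact h

lemma csSqrt (a b : ℝ) {P Q : ℝ→ℝ} (hP : Continuous P) (hQ : Continuous Q)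
    (hP0 : ∀ t, 0 ≤ P t) (hQ0 : ∀ t, 0 ≤ Q t) :
    ∫ t in Ioo a b, Real.sqrt (P t) * Real.sqrt (Q t) ≤
      Real.sqrt (∫ t in Ioo a b, P t) * Real.sqrt (∫ t in Ioo a b, Q t) := by
  have h := csMixed a b hP.sqrt hQ (fun t => Real.sqrt_nonneg _) hQ0
  have e : (∫ t in Ioo a b, (Real.sqrt (P t))^2) = ∫ t in Ioo a b, P t :=
    integral_congr_ae (Filter.Eventually.of_forall fun t => Real.sq_sqrt (hP0 t))
  rw [e] at h
  exact h

lemma sq_deriv {g gy : ℝ→ℝ→ℝ→ℝ}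
    (hd : ∀ x y z, HasDerivAt (fun t => g x t z) (gy x y z) y) (x y z : ℝ) :
    HasDerivAt (fun t => (g x t z)^2) (2 * g x y z * gy x y z) y := by
  have H := (hd x y z).pow 2
  norm_num at H
  exact H

lemma hasDeriv_psiZ_y {g gy} (hg : Cont3 g) (hgy : Cont3 gy)
    (hd : ∀ x y z, HasDerivAt (fun t => g x t z) (gy x y z) y) (x y₀ : ℝ) :
    HasDerivAt (fun t => psiZ g x t) (dZ g gy x y₀) y₀ :=
  derivParam (-1) 1 (F := fun y z => (g x y z)^2)
    (F' := fun y z => 2 * g x y z * gy x y z)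
    ((cont3_fix1 hg x).pow 2) ((continuous_const.mul (cont3_fix1 hg x)).mul (cont3_fix1 hgy x))
    (fun y z => sq_deriv hd x y z) y₀

lemma sq_deriv_x {h hx : ℝ→ℝ→ℝ→ℝ}
    (hd : ∀ x y z, HasDerivAt (fun t => h t y z) (hx x y z) x) (x y z : ℝ) :
    HasDerivAt (fun t => (h t y z)^2) (2 * h x y z * hx x y z) x := by
  have H := (hd x y z).pow 2
  norm_num at H
  exact H

lemma hasDeriv_psiZ_x {h hx} (hh : Cont3 h) (hhx : Cont3 hx)
    (hd : ∀ x y z, HasDerivAt (fun t => h t y z) (hx x y z) x) (x₀ y : ℝ) :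
    HasDerivAt (fun t => psiZ h t y) (dZ h hx x₀ y) x₀ :=
  derivParam (-1) 1 (F := fun x z => (h x y z)^2)
    (F' := fun x z => 2 * h x y z * hx x y z)
    ((cont3_fix2 hh y).pow 2) ((continuous_const.mul (cont3_fix2 hh y)).mul (cont3_fix2 hhx y))
    (fun x z => sq_deriv_x hd x y z) x₀

lemma hasDeriv_theta {h hx} (hh : Cont3 h) (hhx : Cont3 hx)
    (hd : ∀ x y z, HasDerivAt (fun t => h t y z) (hx x y z) x) (L₂ : ℝ) (x₀ : ℝ) :
    HasDerivAt (fun t => ∫ y in Ioo (0:ℝ) L₂, psiZ h t y)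
      (∫ y in Ioo (0:ℝ) L₂, dZ h hx x₀ y) x₀ :=
  derivParam 0 L₂ (F := fun x y => psiZ h x y) (F' := fun x y => dZ h hx x y)
    (contPsiZ hh) (contDZ hh hhx) (fun x y => hasDeriv_psiZ_x hh hhx hd x y) x₀
noncomputable def tY (g gy : ℝ→ℝ→ℝ→ℝ) (L₂ : ℝ) (x : ℝ) : ℝ :=
  (1/L₂) * (∫ y in Ioo (0:ℝ) L₂, psiZ g x y) + ∫ y in Ioo (0:ℝ) L₂, |dZ g gy x y|

noncomputable def thetaX (h : ℝ→ℝ→ℝ→ℝ) (L₂ : ℝ) (x : ℝ) : ℝ :=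
  ∫ y in Ioo (0:ℝ) L₂, psiZ h x y

noncomputable def bigE (h hx : ℝ→ℝ→ℝ→ℝ) (L₂ : ℝ) (x : ℝ) : ℝ :=
  ∫ y in Ioo (0:ℝ) L₂, dZ h hx x y

noncomputable def kH (h hx : ℝ→ℝ→ℝ→ℝ) (L₁ L₂ : ℝ) : ℝ :=
  (1/L₁) * (∫ x in Ioo (0:ℝ) L₁, thetaX h L₂ x) + ∫ x in Ioo (0:ℝ) L₁, |bigE h hx L₂ x|

lemma contPsiZ_fix1 {g} (hg : Cont3 g) (x : ℝ) : Continuous fun y => psiZ g x y :=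
  (contPsiZ hg).comp (continuous_const.prodMk continuous_id)

lemma contDZ_fix1 {g gy} (hg : Cont3 g) (hgy : Cont3 gy) (x : ℝ) :
    Continuous fun y => dZ g gy x y :=
  (contDZ hg hgy).comp (continuous_const.prodMk continuous_id)

lemma tY_bound {L₂ : ℝ} (hL₂ : 0 < L₂) {g gy} (hg : Cont3 g) (hgy : Cont3 gy)
    (hd : ∀ x y z, HasDerivAt (fun t => g x t z) (gy x y z) y) (x : ℝ) :
    ∀ y ∈ Ioo (0:ℝ) L₂, psiZ g x y ≤ tY g gy L₂ x := fun y hy =>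
  agmon1d hL₂ (Ψ := fun t => psiZ g x t) (D := fun t => dZ g gy x t)
    (fun y₀ => hasDeriv_psiZ_y hg hgy hd x y₀) (contDZ_fix1 hg hgy x) hy

lemma tY_cont {L₂ : ℝ} {g gy} (hg : Cont3 g) (hgy : Cont3 gy) :
    Continuous (tY g gy L₂) :=
  (continuous_const.mul (contParam 0 L₂ (F := fun x y => psiZ g x y) (contPsiZ hg))).add
    (contParam 0 L₂ (F := fun x y => |dZ g gy x y|) (contDZ hg hgy).abs)

lemma tY_nonneg {L₂ : ℝ} (hL₂ : 0 < L₂) (g gy : ℝ→ℝ→ℝ→ℝ) (x : ℝ) :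
    0 ≤ tY g gy L₂ x :=
  add_nonneg (mul_nonneg (by positivity)
      (setIntegral_nonneg measurableSet_Ioo fun y _ => psiZ_nonneg g x y))
    (setIntegral_nonneg measurableSet_Ioo fun y _ => abs_nonneg _)

lemma thetaX_cont {L₂ : ℝ} {h} (hh : Cont3 h) : Continuous (thetaX h L₂) :=
  contParam 0 L₂ (F := fun x y => psiZ h x y) (contPsiZ hh)

lemma thetaX_nonneg (h : ℝ→ℝ→ℝ→ℝ) (L₂ x : ℝ) : 0 ≤ thetaX h L₂ x :=
  setIntegral_nonneg measurableSet_Ioo fun y _ => psiZ_nonneg h x y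

lemma bigE_cont {L₂ : ℝ} {h hx} (hh : Cont3 h) (hhx : Cont3 hx) :
    Continuous (bigE h hx L₂) :=
  contParam 0 L₂ (F := fun x y => dZ h hx x y) (contDZ hh hhx)

lemma kH_bound {L₁ L₂ : ℝ} (hL₁ : 0 < L₁) {h hx} (hh : Cont3 h) (hhx : Cont3 hx)
    (hd : ∀ x y z, HasDerivAt (fun t => h t y z) (hx x y z) x) :
    ∀ x ∈ Ioo (0:ℝ) L₁, thetaX h L₂ x ≤ kH h hx L₁ L₂ := fun x hxm =>
  agmon1d hL₁ (Ψ := thetaX h L₂) (D := bigE h hx L₂)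
    (fun x₀ => hasDeriv_theta hh hhx hd L₂ x₀) (bigE_cont hh hhx) hxm

lemma kH_nonneg {L₁ L₂ : ℝ} (hL₁ : 0 < L₁) (h hx : ℝ→ℝ→ℝ→ℝ) :
    0 ≤ kH h hx L₁ L₂ :=
  add_nonneg (mul_nonneg (by positivity)
      (setIntegral_nonneg measurableSet_Ioo fun x _ => thetaX_nonneg h L₂ x))
    (setIntegral_nonneg measurableSet_Ioo fun x _ => abs_nonneg _)

lemma tripleMono (L₁ L₂ : ℝ) {u v : ℝ→ℝ→ℝ→ℝ} (hu : Cont3 u) (hv : Cont3 v)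
    (huv : ∀ x y z, u x y z ≤ v x y z) :
    (∫ x in Ioo (0:ℝ) L₁, ∫ y in Ioo (0:ℝ) L₂, ∫ z in Ioo (-1:ℝ) 1, u x y z)
      ≤ ∫ x in Ioo (0:ℝ) L₁, ∫ y in Ioo (0:ℝ) L₂, ∫ z in Ioo (-1:ℝ) 1, v x y z := by
  have hz : ∀ x y : ℝ, (∫ z in Ioo (-1:ℝ) 1, u x y z) ≤ ∫ z in Ioo (-1:ℝ) 1, v x y z := by
    intro x y
    exact setIntegral_mono_on (intOnIoo (cont3_fix12 hu x y)) (intOnIoo (cont3_fix12 hv x y))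
      measurableSet_Ioo fun z _ => huv x y z
  have hy : ∀ x : ℝ, (∫ y in Ioo (0:ℝ) L₂, ∫ z in Ioo (-1:ℝ) 1, u x y z)
      ≤ ∫ y in Ioo (0:ℝ) L₂, ∫ z in Ioo (-1:ℝ) 1, v x y z := by
    intro x
    exact setIntegral_mono_on
      (intOnIoo ((contParamZ hu).comp (continuous_const.prodMk continuous_id)))
      (intOnIoo ((contParamZ hv).comp (continuous_const.prodMk continuous_id)))
      measurableSet_Ioo fun y _ => hz x y
  exact setIntegral_mono_on
    (intOnIoo (contParam 0 L₂ (F := fun x y => ∫ z in Ioo (-1:ℝ) 1, u x y z) (contParamZ hu)))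
    (intOnIoo (contParam 0 L₂ (F := fun x y => ∫ z in Ioo (-1:ℝ) 1, v x y z) (contParamZ hv)))
    measurableSet_Ioo fun x _ => hy x

lemma phiZ_le {f} (hf : Cont3 f) (x y : ℝ) :
    phiZ f x y ≤ Real.sqrt 2 * Real.sqrt (psiZ f x y) := by
  have h := csIoo (-1) 1 (u := fun _ => (1:ℝ)) (v := fun z => f x y z)
    continuous_const (cont3_fix12 hf x y)
  have e0 : (∫ _ in Ioo (-1:ℝ) 1, ((1:ℝ))^2) = 2 := by
    simp [Real.volume_Ioo]
    norm_num
  have e1 : (∫ z in Ioo (-1:ℝ) 1, |(1:ℝ) * f x y z|) = phiZ f x y := by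
    unfold phiZ
    refine integral_congr_ae (Filter.Eventually.of_forall fun z => ?_)
    show |(1:ℝ) * f x y z| = |f x y z|
    rw [one_mul]
  rw [e1, e0] at h
  exact h

lemma phiZ_sq_le {f} (hf : Cont3 f) (x y : ℝ) :
    (phiZ f x y)^2 ≤ 2 * psiZ f x y := by
  have h := phiZ_le hf x y
  have h2 : (phiZ f x y)^2 ≤ (Real.sqrt 2 * Real.sqrt (psiZ f x y))^2 :=
    pow_le_pow_left₀ (phiZ_nonneg f x y) h 2
  calc (phiZ f x y)^2 ≤ (Real.sqrt 2 * Real.sqrt (psiZ f x y))^2 := h2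
    _ = 2 * psiZ f x y := by
        rw [mul_pow, Real.sq_sqrt (by norm_num : (0:ℝ) ≤ 2), Real.sq_sqrt (psiZ_nonneg f x y)]

lemma l2sq_nonneg (L₁ L₂ : ℝ) (f : ℝ → ℝ → ℝ → ℝ) : 0 ≤ l2sq L₁ L₂ f :=
  setIntegral_nonneg measurableSet_Ioo fun _ _ =>
    setIntegral_nonneg measurableSet_Ioo fun _ _ =>
      setIntegral_nonneg measurableSet_Ioo fun _ _ => sq_nonneg _

/-- key two-variable bound: `∫∫ |dZ| ≤ 2 √(l2sq g) √(l2sq g')` -/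
lemma dZ_int_le (L₁ L₂ : ℝ) {g g'} (hg : Cont3 g) (hg' : Cont3 g') :
    (∫ x in Ioo (0:ℝ) L₁, ∫ y in Ioo (0:ℝ) L₂, |dZ g g' x y|)
      ≤ 2 * (Real.sqrt (l2sq L₁ L₂ g) * Real.sqrt (l2sq L₁ L₂ g')) := by
  have ylevel : ∀ x : ℝ, (∫ y in Ioo (0:ℝ) L₂, |dZ g g' x y|)
      ≤ 2 * (Real.sqrt (thetaX g L₂ x) * Real.sqrt (thetaX g' L₂ x)) := by
    intro x
    have p1 : (∫ y in Ioo (0:ℝ) L₂, |dZ g g' x y|)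
        ≤ ∫ y in Ioo (0:ℝ) L₂, 2 * (Real.sqrt (psiZ g x y) * Real.sqrt (psiZ g' x y)) := by
      refine setIntegral_mono_on (intOnIoo (contDZ_fix1 hg hg' x).abs)
        (intOnIoo (continuous_const.mul
          (((contPsiZ_fix1 hg x).sqrt).mul ((contPsiZ_fix1 hg' x).sqrt))))
        measurableSet_Ioo fun y _ => dZ_abs_le hg hg' x y
    have p2 : (∫ y in Ioo (0:ℝ) L₂, 2 * (Real.sqrt (psiZ g x y) * Real.sqrt (psiZ g' x y)))
        = 2 * ∫ y in Ioo (0:ℝ) L₂, Real.sqrt (psiZ g x y) * Real.sqrt (psiZ g' x y) :=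
      integral_const_mul 2 _
    have p3 := csSqrt 0 L₂ (contPsiZ_fix1 hg x) (contPsiZ_fix1 hg' x)
      (fun y => psiZ_nonneg g x y) (fun y => psiZ_nonneg g' x y)
    calc (∫ y in Ioo (0:ℝ) L₂, |dZ g g' x y|)
        ≤ 2 * ∫ y in Ioo (0:ℝ) L₂, Real.sqrt (psiZ g x y) * Real.sqrt (psiZ g' x y) := by
          rw [← p2]; exact p1
      _ ≤ 2 * (Real.sqrt (thetaX g L₂ x) * Real.sqrt (thetaX g' L₂ x)) := by
          unfold thetaX; linarith
  have xlevel : (∫ x in Ioo (0:ℝ) L₁, ∫ y in Ioo (0:ℝ) L₂, |dZ g g' x y|)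
      ≤ ∫ x in Ioo (0:ℝ) L₁,
          2 * (Real.sqrt (thetaX g L₂ x) * Real.sqrt (thetaX g' L₂ x)) := by
    refine setIntegral_mono_on
      (intOnIoo (contParam 0 L₂ (F := fun x y => |dZ g g' x y|) (contDZ hg hg').abs))
      (intOnIoo (continuous_const.mul
        (((thetaX_cont hg).sqrt).mul ((thetaX_cont hg').sqrt))))
      measurableSet_Ioo fun x _ => ylevel x
  have p4 : (∫ x in Ioo (0:ℝ) L₁,
        2 * (Real.sqrt (thetaX g L₂ x) * Real.sqrt (thetaX g' L₂ x)))
      = 2 * ∫ x in Ioo (0:ℝ) L₁, Real.sqrt (thetaX g L₂ x) * Real.sqrt (thetaX g' L₂ x) :=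
    integral_const_mul 2 _
  have p5 := csSqrt 0 L₁ (thetaX_cont hg) (thetaX_cont hg')
    (fun x => thetaX_nonneg g L₂ x) (fun x => thetaX_nonneg g' L₂ x)
  have e1 : (∫ x in Ioo (0:ℝ) L₁, thetaX g L₂ x) = l2sq L₁ L₂ g := rfl
  have e2 : (∫ x in Ioo (0:ℝ) L₁, thetaX g' L₂ x) = l2sq L₁ L₂ g' := rfl
  calc (∫ x in Ioo (0:ℝ) L₁, ∫ y in Ioo (0:ℝ) L₂, |dZ g g' x y|)
      ≤ 2 * ∫ x in Ioo (0:ℝ) L₁, Real.sqrt (thetaX g L₂ x) * Real.sqrt (thetaX g' L₂ x) := by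
        rw [← p4]; exact xlevel
    _ ≤ 2 * (Real.sqrt (l2sq L₁ L₂ g) * Real.sqrt (l2sq L₁ L₂ g')) := by
        rw [← e1, ← e2]; linarith

lemma tY_int_le (L₁ L₂ : ℝ) {g gy} (hg : Cont3 g) (hgy : Cont3 gy) :
    (∫ x in Ioo (0:ℝ) L₁, tY g gy L₂ x)
      ≤ (1/L₂) * l2sq L₁ L₂ g
        + 2 * (Real.sqrt (l2sq L₁ L₂ g) * Real.sqrt (l2sq L₁ L₂ gy)) := by
  have i1 : IntegrableOn (fun x => (1/L₂) * ∫ y in Ioo (0:ℝ) L₂, psiZ g x y)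
      (Ioo (0:ℝ) L₁) :=
    intOnIoo (continuous_const.mul (contParam 0 L₂ (F := fun x y => psiZ g x y) (contPsiZ hg)))
  have i2 : IntegrableOn (fun x => ∫ y in Ioo (0:ℝ) L₂, |dZ g gy x y|) (Ioo (0:ℝ) L₁) :=
    intOnIoo (contParam 0 L₂ (F := fun x y => |dZ g gy x y|) (contDZ hg hgy).abs)
  have e0 : (∫ x in Ioo (0:ℝ) L₁, tY g gy L₂ x)
      = (∫ x in Ioo (0:ℝ) L₁, (1/L₂) * ∫ y in Ioo (0:ℝ) L₂, psiZ g x y)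
        + ∫ x in Ioo (0:ℝ) L₁, ∫ y in Ioo (0:ℝ) L₂, |dZ g gy x y| := by
    unfold tY
    exact integral_add i1 i2
  have e1 : (∫ x in Ioo (0:ℝ) L₁, (1/L₂) * ∫ y in Ioo (0:ℝ) L₂, psiZ g x y)
      = (1/L₂) * l2sq L₁ L₂ g := integral_const_mul _ _
  have e2 := dZ_int_le L₁ L₂ hg hgy
  rw [e0, e1]
  linarith

lemma kH_le (L₁ L₂ : ℝ) {h hx} (hh : Cont3 h) (hhx : Cont3 hx) :
    kH h hx L₁ L₂ ≤ (1/L₁) * l2sq L₁ L₂ h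
      + 2 * (Real.sqrt (l2sq L₁ L₂ h) * Real.sqrt (l2sq L₁ L₂ hx)) := by
  have e1 : (∫ x in Ioo (0:ℝ) L₁, thetaX h L₂ x) = l2sq L₁ L₂ h := rfl
  have habs : ∀ x : ℝ, |bigE h hx L₂ x| ≤ ∫ y in Ioo (0:ℝ) L₂, |dZ h hx x y| := by
    intro x
    unfold bigE
    simpa only [Real.norm_eq_abs] using norm_integral_le_integral_norm
      (μ := volume.restrict (Ioo (0:ℝ) L₂)) (fun y => dZ h hx x y)
  have h2 : (∫ x in Ioo (0:ℝ) L₁, |bigE h hx L₂ x|)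
      ≤ ∫ x in Ioo (0:ℝ) L₁, ∫ y in Ioo (0:ℝ) L₂, |dZ h hx x y| := by
    refine setIntegral_mono_on (intOnIoo (bigE_cont hh hhx).abs)
      (intOnIoo (contParam 0 L₂ (F := fun x y => |dZ h hx x y|) (contDZ hh hhx).abs))
      measurableSet_Ioo fun x _ => habs x
  have h3 := dZ_int_le L₁ L₂ hh hhx
  unfold kH
  rw [e1]
  linarith

lemma sqrt_sum_bound {L S G : ℝ} (hL : 0 < L) (hS : 0 ≤ S) (hG : 0 ≤ G) :
    Real.sqrt ((1/L) * S + 2 * (Real.sqrt S * G))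
      ≤ (Real.sqrt (1/L) + Real.sqrt 2) *
        (Real.sqrt (Real.sqrt S) * (Real.sqrt (Real.sqrt S) + Real.sqrt G)) := by
  set N := Real.sqrt S with hN
  have hN0 : 0 ≤ N := Real.sqrt_nonneg _
  have hNN : Real.sqrt N * Real.sqrt N = N := Real.mul_self_sqrt hN0
  have step1 : Real.sqrt ((1/L) * S + 2 * (N * G))
      ≤ Real.sqrt ((1/L) * S) + Real.sqrt (2 * (N * G)) :=
    sqrtAdd (by positivity) (by positivity)
  have e1 : Real.sqrt ((1/L) * S) = Real.sqrt (1/L) * N := by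
    rw [Real.sqrt_mul (by positivity) S]
  have e2 : Real.sqrt (2 * (N * G)) = Real.sqrt 2 * (Real.sqrt N * Real.sqrt G) := by
    rw [Real.sqrt_mul (by norm_num) (N * G), Real.sqrt_mul hN0 G]
  have hsN : 0 ≤ Real.sqrt N := Real.sqrt_nonneg _
  have hsG : 0 ≤ Real.sqrt G := Real.sqrt_nonneg _
  have hsL : 0 ≤ Real.sqrt (1/L) := Real.sqrt_nonneg _
  have hs2 : 0 ≤ Real.sqrt 2 := Real.sqrt_nonneg _
  calc Real.sqrt ((1/L) * S + 2 * (N * G))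
      ≤ Real.sqrt (1/L) * N + Real.sqrt 2 * (Real.sqrt N * Real.sqrt G) := by
        rw [e1, e2] at step1; exact step1
    _ ≤ (Real.sqrt (1/L) + Real.sqrt 2) * (Real.sqrt N * (Real.sqrt N + Real.sqrt G)) := by
        nlinarith [mul_nonneg (mul_nonneg hsL hsN) hsG, mul_nonneg (mul_nonneg hs2 hsN) hsN,
          hNN]

/-- the anisotropic tri-linear estimate, second form. -/
theorem trilinear_estimate_second_form (L₁ L₂ : ℝ) (hL₁ : 0 < L₁) (hL₂ : 0 < L₂) :
    ∃ C > 0, ∀ f fx fy g gx gy h hx hy : ℝ → ℝ → ℝ → ℝ,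
      (∀ x y z, HasDerivAt (fun t => f t y z) (fx x y z) x) →
      (∀ x y z, HasDerivAt (fun t => f x t z) (fy x y z) y) →
      (∀ x y z, HasDerivAt (fun t => g t y z) (gx x y z) x) →
      (∀ x y z, HasDerivAt (fun t => g x t z) (gy x y z) y) →
      (∀ x y z, HasDerivAt (fun t => h t y z) (hx x y z) x) →
      (∀ x y z, HasDerivAt (fun t => h x t z) (hy x y z) y) →
      Cont3 f → Cont3 fx → Cont3 fy → Cont3 g → Cont3 gx → Cont3 gy →
      Cont3 h → Cont3 hx → Cont3 hy →
      (∫ x in Ioo (0:ℝ) L₁, ∫ y in Ioo (0:ℝ) L₂,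
          (∫ z in Ioo (-1:ℝ) 1, |f x y z|) * (∫ z in Ioo (-1:ℝ) 1, |g x y z * h x y z|))
        ≤ C * l2norm L₁ L₂ f *
            Real.sqrt (l2norm L₁ L₂ g) *
            (Real.sqrt (l2norm L₁ L₂ g) + Real.sqrt (gradHnorm L₁ L₂ gx gy)) *
            Real.sqrt (l2norm L₁ L₂ h) *
            (Real.sqrt (l2norm L₁ L₂ h) + Real.sqrt (gradHnorm L₁ L₂ hx hy)) := by
  refine ⟨Real.sqrt 2 * ((Real.sqrt (1/L₂) + Real.sqrt 2) * (Real.sqrt (1/L₁) + Real.sqrt 2)),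
    by positivity, ?_⟩
  intro f fx fy g gx gy h hx hy hdfx hdfy hdgx hdgy hdhx hdhy cf cfx cfy cg cgx cgy ch chx chy
  -- continuity facts
  have contAf : Continuous fun x => Real.sqrt (∫ y in Ioo (0:ℝ) L₂, (phiZ f x y)^2) :=
    (contParam 0 L₂ (F := fun x y => (phiZ f x y)^2) ((contPhiZ cf).pow 2)).sqrt
  have contPhiFix : ∀ x : ℝ, Continuous fun y => phiZ f x y := fun x =>
    (contPhiZ cf).comp (continuous_const.prodMk continuous_id)
  have contGhFix : ∀ x : ℝ, Continuous fun y => ghZ g h x y := fun x =>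
    (contGhZ cg ch).comp (continuous_const.prodMk continuous_id)
  -- inner bound (fixed x)
  have inner_bound : ∀ x : ℝ,
      (∫ y in Ioo (0:ℝ) L₂, phiZ f x y * ghZ g h x y)
        ≤ Real.sqrt (tY g gy L₂ x) *
            (Real.sqrt (∫ y in Ioo (0:ℝ) L₂, (phiZ f x y)^2) *
              Real.sqrt (thetaX h L₂ x)) := by
    intro x
    have pt : ∀ y ∈ Ioo (0:ℝ) L₂, phiZ f x y * ghZ g h x y
        ≤ Real.sqrt (tY g gy L₂ x) * (phiZ f x y * Real.sqrt (psiZ h x y)) := by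
      intro y hy
      have c1 : ghZ g h x y ≤ Real.sqrt (psiZ g x y) * Real.sqrt (psiZ h x y) := csZ cg ch x y
      have c2 : Real.sqrt (psiZ g x y) ≤ Real.sqrt (tY g gy L₂ x) :=
        Real.sqrt_le_sqrt (tY_bound hL₂ cg cgy hdgy x y hy)
      calc phiZ f x y * ghZ g h x y
          ≤ phiZ f x y * (Real.sqrt (psiZ g x y) * Real.sqrt (psiZ h x y)) :=
            mul_le_mul_of_nonneg_left c1 (phiZ_nonneg f x y)
        _ = Real.sqrt (psiZ g x y) * (phiZ f x y * Real.sqrt (psiZ h x y)) := by ring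
        _ ≤ Real.sqrt (tY g gy L₂ x) * (phiZ f x y * Real.sqrt (psiZ h x y)) :=
            mul_le_mul_of_nonneg_right c2
              (mul_nonneg (phiZ_nonneg f x y) (Real.sqrt_nonneg _))
    have m1 : (∫ y in Ioo (0:ℝ) L₂, phiZ f x y * ghZ g h x y)
        ≤ ∫ y in Ioo (0:ℝ) L₂,
            Real.sqrt (tY g gy L₂ x) * (phiZ f x y * Real.sqrt (psiZ h x y)) :=
      setIntegral_mono_on (intOnIoo ((contPhiFix x).mul (contGhFix x)))
        (intOnIoo (continuous_const.mul
          ((contPhiFix x).mul (contPsiZ_fix1 ch x).sqrt)))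
        measurableSet_Ioo pt
    have m2 : (∫ y in Ioo (0:ℝ) L₂,
          Real.sqrt (tY g gy L₂ x) * (phiZ f x y * Real.sqrt (psiZ h x y)))
        = Real.sqrt (tY g gy L₂ x) *
            ∫ y in Ioo (0:ℝ) L₂, phiZ f x y * Real.sqrt (psiZ h x y) :=
      integral_const_mul _ _
    have m3 := csMixed 0 L₂ (u := fun y => phiZ f x y) (Q := fun y => psiZ h x y)
      (contPhiFix x) (contPsiZ_fix1 ch x) (phiZ_nonneg f x) (psiZ_nonneg h x)
    calc (∫ y in Ioo (0:ℝ) L₂, phiZ f x y * ghZ g h x y)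
        ≤ Real.sqrt (tY g gy L₂ x) *
            ∫ y in Ioo (0:ℝ) L₂, phiZ f x y * Real.sqrt (psiZ h x y) := by
          rw [← m2]; exact m1
      _ ≤ Real.sqrt (tY g gy L₂ x) *
            (Real.sqrt (∫ y in Ioo (0:ℝ) L₂, (phiZ f x y)^2) *
              Real.sqrt (thetaX h L₂ x)) :=
          mul_le_mul_of_nonneg_left m3 (Real.sqrt_nonneg _)
  -- outer
  have outer1 : (∫ x in Ioo (0:ℝ) L₁, ∫ y in Ioo (0:ℝ) L₂, phiZ f x y * ghZ g h x y)
      ≤ ∫ x in Ioo (0:ℝ) L₁, Real.sqrt (tY g gy L₂ x) *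
          (Real.sqrt (∫ y in Ioo (0:ℝ) L₂, (phiZ f x y)^2) *
            Real.sqrt (thetaX h L₂ x)) :=
    setIntegral_mono_on
      (intOnIoo (contParam 0 L₂ (F := fun x y => phiZ f x y * ghZ g h x y)
        ((contPhiZ cf).mul (contGhZ cg ch))))
      (intOnIoo ((tY_cont cg cgy).sqrt.mul (contAf.mul (thetaX_cont ch).sqrt)))
      measurableSet_Ioo fun x _ => inner_bound x
  have outer2 : (∫ x in Ioo (0:ℝ) L₁, Real.sqrt (tY g gy L₂ x) *
        (Real.sqrt (∫ y in Ioo (0:ℝ) L₂, (phiZ f x y)^2) * Real.sqrt (thetaX h L₂ x)))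
      ≤ ∫ x in Ioo (0:ℝ) L₁, Real.sqrt (kH h hx L₁ L₂) *
          ((Real.sqrt (∫ y in Ioo (0:ℝ) L₂, (phiZ f x y)^2)) * Real.sqrt (tY g gy L₂ x)) := by
    refine setIntegral_mono_on
      (intOnIoo ((tY_cont cg cgy).sqrt.mul (contAf.mul (thetaX_cont ch).sqrt)))
      (intOnIoo (continuous_const.mul (contAf.mul (tY_cont cg cgy).sqrt)))
      measurableSet_Ioo fun x hmem => ?_
    have hθ : Real.sqrt (thetaX h L₂ x) ≤ Real.sqrt (kH h hx L₁ L₂) :=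
      Real.sqrt_le_sqrt (kH_bound hL₁ ch chx hdhx x hmem)
    calc Real.sqrt (tY g gy L₂ x) *
          (Real.sqrt (∫ y in Ioo (0:ℝ) L₂, (phiZ f x y)^2) * Real.sqrt (thetaX h L₂ x))
        = (Real.sqrt (∫ y in Ioo (0:ℝ) L₂, (phiZ f x y)^2) * Real.sqrt (tY g gy L₂ x)) *
            Real.sqrt (thetaX h L₂ x) := by ring
      _ ≤ (Real.sqrt (∫ y in Ioo (0:ℝ) L₂, (phiZ f x y)^2) * Real.sqrt (tY g gy L₂ x)) *
            Real.sqrt (kH h hx L₁ L₂) :=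
          mul_le_mul_of_nonneg_left hθ
            (mul_nonneg (Real.sqrt_nonneg _) (Real.sqrt_nonneg _))
      _ = Real.sqrt (kH h hx L₁ L₂) *
            ((Real.sqrt (∫ y in Ioo (0:ℝ) L₂, (phiZ f x y)^2)) *
              Real.sqrt (tY g gy L₂ x)) := by ring
  have e3 : (∫ x in Ioo (0:ℝ) L₁, Real.sqrt (kH h hx L₁ L₂) *
        ((Real.sqrt (∫ y in Ioo (0:ℝ) L₂, (phiZ f x y)^2)) * Real.sqrt (tY g gy L₂ x)))
      = Real.sqrt (kH h hx L₁ L₂) *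
          ∫ x in Ioo (0:ℝ) L₁, (Real.sqrt (∫ y in Ioo (0:ℝ) L₂, (phiZ f x y)^2)) *
            Real.sqrt (tY g gy L₂ x) := integral_const_mul _ _
  have m4 := csMixed 0 L₁
    (u := fun x => Real.sqrt (∫ y in Ioo (0:ℝ) L₂, (phiZ f x y)^2))
    (Q := tY g gy L₂) contAf (tY_cont cg cgy)
    (fun x => Real.sqrt_nonneg _) (tY_nonneg hL₂ g gy)
  -- bound the Af part
  have eAf : (∫ x in Ioo (0:ℝ) L₁,
        (Real.sqrt (∫ y in Ioo (0:ℝ) L₂, (phiZ f x y)^2))^2)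
      = ∫ x in Ioo (0:ℝ) L₁, ∫ y in Ioo (0:ℝ) L₂, (phiZ f x y)^2 :=
    integral_congr_ae (Filter.Eventually.of_forall fun x => by
      show (Real.sqrt _)^2 = _
      exact Real.sq_sqrt (setIntegral_nonneg measurableSet_Ioo fun y _ => sq_nonneg _))
  have hAf2 : (∫ x in Ioo (0:ℝ) L₁, ∫ y in Ioo (0:ℝ) L₂, (phiZ f x y)^2)
      ≤ 2 * l2sq L₁ L₂ f := by
    have ylevel : ∀ x : ℝ, (∫ y in Ioo (0:ℝ) L₂, (phiZ f x y)^2)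
        ≤ 2 * thetaX f L₂ x := by
      intro x
      have := setIntegral_mono_on (s := Ioo (0:ℝ) L₂)
        (f := fun y => (phiZ f x y)^2) (g := fun y => 2 * psiZ f x y)
        (intOnIoo ((contPhiFix x).pow 2))
        (intOnIoo (continuous_const.mul (contPsiZ_fix1 cf x)))
        measurableSet_Ioo (fun y _ => phiZ_sq_le cf x y)
      rwa [integral_const_mul] at this
    have xlevel : (∫ x in Ioo (0:ℝ) L₁, ∫ y in Ioo (0:ℝ) L₂, (phiZ f x y)^2)
        ≤ ∫ x in Ioo (0:ℝ) L₁, 2 * thetaX f L₂ x :=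
      setIntegral_mono_on
        (intOnIoo (contParam 0 L₂ (F := fun x y => (phiZ f x y)^2) ((contPhiZ cf).pow 2)))
        (intOnIoo (continuous_const.mul (thetaX_cont cf)))
        measurableSet_Ioo fun x _ => ylevel x
    have : (∫ x in Ioo (0:ℝ) L₁, 2 * thetaX f L₂ x) = 2 * l2sq L₁ L₂ f := by
      rw [integral_const_mul]; rfl
    linarith
  have hAfinal : Real.sqrt (∫ x in Ioo (0:ℝ) L₁,
        (Real.sqrt (∫ y in Ioo (0:ℝ) L₂, (phiZ f x y)^2))^2)
      ≤ Real.sqrt 2 * l2norm L₁ L₂ f := by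
    rw [eAf]
    calc Real.sqrt (∫ x in Ioo (0:ℝ) L₁, ∫ y in Ioo (0:ℝ) L₂, (phiZ f x y)^2)
        ≤ Real.sqrt (2 * l2sq L₁ L₂ f) := Real.sqrt_le_sqrt hAf2
      _ = Real.sqrt 2 * l2norm L₁ L₂ f := Real.sqrt_mul (by norm_num) _
  -- bound the tY part
  have hgyG : Real.sqrt (l2sq L₁ L₂ gy) ≤ gradHnorm L₁ L₂ gx gy := by
    refine Real.sqrt_le_sqrt ?_
    exact tripleMono L₁ L₂ (u := fun x y z => (gy x y z)^2)
      (v := fun x y z => (gx x y z)^2 + (gy x y z)^2)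
      (Continuous.pow cgy 2) (Continuous.add (Continuous.pow cgx 2) (Continuous.pow cgy 2))
      (fun x y z => le_add_of_nonneg_left (sq_nonneg _))
  have hGg0 : (0:ℝ) ≤ gradHnorm L₁ L₂ gx gy := Real.sqrt_nonneg _
  have hTfinal : Real.sqrt (∫ x in Ioo (0:ℝ) L₁, tY g gy L₂ x)
      ≤ (Real.sqrt (1/L₂) + Real.sqrt 2) *
          (Real.sqrt (l2norm L₁ L₂ g) *
            (Real.sqrt (l2norm L₁ L₂ g) + Real.sqrt (gradHnorm L₁ L₂ gx gy))) := by
    have t1 : (∫ x in Ioo (0:ℝ) L₁, tY g gy L₂ x)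
        ≤ (1/L₂) * l2sq L₁ L₂ g +
            2 * (Real.sqrt (l2sq L₁ L₂ g) * gradHnorm L₁ L₂ gx gy) := by
      have := tY_int_le L₁ L₂ cg cgy
      have h2 : 2 * (Real.sqrt (l2sq L₁ L₂ g) * Real.sqrt (l2sq L₁ L₂ gy))
          ≤ 2 * (Real.sqrt (l2sq L₁ L₂ g) * gradHnorm L₁ L₂ gx gy) := by
        have := mul_le_mul_of_nonneg_left hgyG (Real.sqrt_nonneg (l2sq L₁ L₂ g))
        linarith
      linarith
    calc Real.sqrt (∫ x in Ioo (0:ℝ) L₁, tY g gy L₂ x)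
        ≤ Real.sqrt ((1/L₂) * l2sq L₁ L₂ g +
            2 * (Real.sqrt (l2sq L₁ L₂ g) * gradHnorm L₁ L₂ gx gy)) :=
          Real.sqrt_le_sqrt t1
      _ ≤ _ := sqrt_sum_bound hL₂ (l2sq_nonneg L₁ L₂ g) hGg0
  -- bound the kH part
  have hhxG : Real.sqrt (l2sq L₁ L₂ hx) ≤ gradHnorm L₁ L₂ hx hy := by
    refine Real.sqrt_le_sqrt ?_
    exact tripleMono L₁ L₂ (u := fun x y z => (hx x y z)^2)
      (v := fun x y z => (hx x y z)^2 + (hy x y z)^2)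
      (Continuous.pow chx 2) (Continuous.add (Continuous.pow chx 2) (Continuous.pow chy 2))
      (fun x y z => le_add_of_nonneg_right (sq_nonneg _))
  have hGh0 : (0:ℝ) ≤ gradHnorm L₁ L₂ hx hy := Real.sqrt_nonneg _
  have hKfinal : Real.sqrt (kH h hx L₁ L₂)
      ≤ (Real.sqrt (1/L₁) + Real.sqrt 2) *
          (Real.sqrt (l2norm L₁ L₂ h) *
            (Real.sqrt (l2norm L₁ L₂ h) + Real.sqrt (gradHnorm L₁ L₂ hx hy))) := by
    have t1 : kH h hx L₁ L₂
        ≤ (1/L₁) * l2sq L₁ L₂ h +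
            2 * (Real.sqrt (l2sq L₁ L₂ h) * gradHnorm L₁ L₂ hx hy) := by
      have := kH_le L₁ L₂ ch chx
      have h2 : 2 * (Real.sqrt (l2sq L₁ L₂ h) * Real.sqrt (l2sq L₁ L₂ hx))
          ≤ 2 * (Real.sqrt (l2sq L₁ L₂ h) * gradHnorm L₁ L₂ hx hy) := by
        have := mul_le_mul_of_nonneg_left hhxG (Real.sqrt_nonneg (l2sq L₁ L₂ h))
        linarith
      linarith
    calc Real.sqrt (kH h hx L₁ L₂)
        ≤ Real.sqrt ((1/L₁) * l2sq L₁ L₂ h +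
            2 * (Real.sqrt (l2sq L₁ L₂ h) * gradHnorm L₁ L₂ hx hy)) :=
          Real.sqrt_le_sqrt t1
      _ ≤ _ := sqrt_sum_bound hL₁ (l2sq_nonneg L₁ L₂ h) hGh0
  -- final assembly
  have hNf0 : (0:ℝ) ≤ l2norm L₁ L₂ f := Real.sqrt_nonneg _
  calc (∫ x in Ioo (0:ℝ) L₁, ∫ y in Ioo (0:ℝ) L₂,
        (∫ z in Ioo (-1:ℝ) 1, |f x y z|) * (∫ z in Ioo (-1:ℝ) 1, |g x y z * h x y z|))
      = ∫ x in Ioo (0:ℝ) L₁, ∫ y in Ioo (0:ℝ) L₂, phiZ f x y * ghZ g h x y := rfl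
    _ ≤ ∫ x in Ioo (0:ℝ) L₁, Real.sqrt (tY g gy L₂ x) *
          (Real.sqrt (∫ y in Ioo (0:ℝ) L₂, (phiZ f x y)^2) *
            Real.sqrt (thetaX h L₂ x)) := outer1
    _ ≤ ∫ x in Ioo (0:ℝ) L₁, Real.sqrt (kH h hx L₁ L₂) *
          ((Real.sqrt (∫ y in Ioo (0:ℝ) L₂, (phiZ f x y)^2)) *
            Real.sqrt (tY g gy L₂ x)) := outer2
    _ = Real.sqrt (kH h hx L₁ L₂) *
          ∫ x in Ioo (0:ℝ) L₁, (Real.sqrt (∫ y in Ioo (0:ℝ) L₂, (phiZ f x y)^2)) *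
            Real.sqrt (tY g gy L₂ x) := e3
    _ ≤ Real.sqrt (kH h hx L₁ L₂) *
          (Real.sqrt (∫ x in Ioo (0:ℝ) L₁,
              (Real.sqrt (∫ y in Ioo (0:ℝ) L₂, (phiZ f x y)^2))^2) *
            Real.sqrt (∫ x in Ioo (0:ℝ) L₁, tY g gy L₂ x)) :=
        mul_le_mul_of_nonneg_left m4 (Real.sqrt_nonneg _)
    _ ≤ ((Real.sqrt (1/L₁) + Real.sqrt 2) *
          (Real.sqrt (l2norm L₁ L₂ h) *
            (Real.sqrt (l2norm L₁ L₂ h) + Real.sqrt (gradHnorm L₁ L₂ hx hy)))) *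
        ((Real.sqrt 2 * l2norm L₁ L₂ f) *
          ((Real.sqrt (1/L₂) + Real.sqrt 2) *
            (Real.sqrt (l2norm L₁ L₂ g) *
              (Real.sqrt (l2norm L₁ L₂ g) + Real.sqrt (gradHnorm L₁ L₂ gx gy))))) := by
        apply mul_le_mul hKfinal
          (mul_le_mul hAfinal hTfinal (Real.sqrt_nonneg _)
            (mul_nonneg (Real.sqrt_nonneg _) hNf0))
          (mul_nonneg (Real.sqrt_nonneg _) (Real.sqrt_nonneg _))
          (mul_nonneg (by positivity)
            (mul_nonneg (Real.sqrt_nonneg _)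
              (add_nonneg (Real.sqrt_nonneg _) (Real.sqrt_nonneg _))))
    _ = Real.sqrt 2 * ((Real.sqrt (1/L₂) + Real.sqrt 2) * (Real.sqrt (1/L₁) + Real.sqrt 2)) *
          l2norm L₁ L₂ f * Real.sqrt (l2norm L₁ L₂ g) *
          (Real.sqrt (l2norm L₁ L₂ g) + Real.sqrt (gradHnorm L₁ L₂ gx gy)) *
          Real.sqrt (l2norm L₁ L₂ h) *
          (Real.sqrt (l2norm L₁ L₂ h) + Real.sqrt (gradHnorm L₁ L₂ hx hy)) := by ring
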